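/- Let f₁, f₂ ∈ ℝ[x₁,…,xₙ] be homogeneous polynomials such that (f₁)^k·f₂ is hyperbolic with respect to e ∈ ℝⁿ for some natural number k ≥ 1, and let h ∈ ℝ[x₁,…,xₙ] be homogeneous of degree deg((f₁)^k f₂) − 1. If h interlaces (f₁)^k·f₂ with respect to e, then (f₁)^{k−1} divides h. -/

import Mathlib

/-!
Restrict to a line `t ↦ a + t e` and write `u`, `w`, `q` for the restrictions of `f₁`, `f₂`, `h`.
Since `u^k w` is real-rooted, `u` splits over `ℝ`; at a root of `u` of multiplicity `μ`, the
product `u^k w` vanishes to order at least `kμ`, and interlacing forces `q` to vanish there to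
order at least `kμ - 1 ≥ (k-1)μ`, so `u^(k-1) ∣ q`. As `f₁` is homogeneous with `f₁(e) ≠ 0`,
`f₁(x + t e) ∈ ℝ[x][t]` has the constant leading coefficient `f₁(e)`, so `h(x + t e)` can be
divided by `f₁(x + t e)^(k-1)` over `ℝ[x]`; the remainder vanishes on every line, hence is zero,
and `t = 0` gives `f₁^(k-1) ∣ h`.
-/

open Filter Topology

/-- The restriction of a multivariate polynomial to the line `t ↦ t•e + a`,
as a univariate polynomial in `t`. -/
noncomputable def lineRestrict {n : ℕ} (f : MvPolynomial (Fin n) ℝ) (e a : Fin n → ℝ) :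
    Polynomial ℝ :=
  MvPolynomial.aeval (fun i => Polynomial.C (a i) + Polynomial.C (e i) * Polynomial.X) f

/-- A univariate real polynomial has only real zeros: every complex root is real. -/
def RealRooted (p : Polynomial ℝ) : Prop :=
  ∀ z : ℂ, Polynomial.aeval z p = 0 → z.im = 0

/-- `f` is hyperbolic with respect to `e`: `f(e) ≠ 0` and for every `a`,
all roots of `t ↦ f(t•e + a)` are real. -/
def IsHyperbolic {n : ℕ} (f : MvPolynomial (Fin n) ℝ) (e : Fin n → ℝ) : Prop :=
  MvPolynomial.eval e f ≠ 0 ∧ ∀ a : Fin n → ℝ, RealRooted (lineRestrict f e a)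

/-- The roots of a univariate real polynomial, sorted increasingly (with multiplicity). -/
noncomputable def sortedRoots (p : Polynomial ℝ) : List ℝ :=
  p.roots.sort (· ≤ ·)

/-- `q` interlaces `p` (univariate): both have only real roots, `deg q = deg p − 1`,
and with roots `α₁ ≤ … ≤ α_d` of `p`, `β₁ ≤ … ≤ β_{d-1}` of `q`,
one has `α_i ≤ β_i ≤ α_{i+1}`. -/
def InterlacesU (q p : Polynomial ℝ) : Prop :=
  RealRooted p ∧ RealRooted q ∧ q.natDegree + 1 = p.natDegree ∧
    ∀ i : ℕ, i + 1 < (sortedRoots p).length →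
      (sortedRoots p).getD i 0 ≤ (sortedRoots q).getD i 0 ∧
        (sortedRoots q).getD i 0 ≤ (sortedRoots p).getD (i + 1) 0

/-- `q` strictly interlaces `p` (univariate): all interlacing inequalities are strict. -/
def StrictInterlacesU (q p : Polynomial ℝ) : Prop :=
  RealRooted p ∧ RealRooted q ∧ q.natDegree + 1 = p.natDegree ∧
    ∀ i : ℕ, i + 1 < (sortedRoots p).length →
      (sortedRoots p).getD i 0 < (sortedRoots q).getD i 0 ∧
        (sortedRoots q).getD i 0 < (sortedRoots p).getD (i + 1) 0

/-- `g` interlaces `f` with respect to `e`: `g(t•e+a)` interlaces `f(t•e+a)` for every `a`. -/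
def Interlaces {n : ℕ} (g f : MvPolynomial (Fin n) ℝ) (e : Fin n → ℝ) : Prop :=
  ∀ a : Fin n → ℝ, InterlacesU (lineRestrict g e a) (lineRestrict f e a)

/-- `g` strictly interlaces `f` with respect to `e`: `g(t•e+a)` strictly interlaces
`f(t•e+a)` for all `a` in a nonempty Zariski-open subset of `ℝⁿ`. -/
def StrictInterlaces {n : ℕ} (g f : MvPolynomial (Fin n) ℝ) (e : Fin n → ℝ) : Prop :=
  ∃ p : MvPolynomial (Fin n) ℝ, p ≠ 0 ∧ ∀ a : Fin n → ℝ, MvPolynomial.eval a p ≠ 0 →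
    StrictInterlacesU (lineRestrict g e a) (lineRestrict f e a)

/-- The hyperbolicity cone `C(f,e)`: the connected component of `e` in `ℝⁿ \ V_ℝ(f)`. -/
def hypCone {n : ℕ} (f : MvPolynomial (Fin n) ℝ) (e : Fin n → ℝ) : Set (Fin n → ℝ) :=
  connectedComponentIn {x | MvPolynomial.eval x f ≠ 0} e

/-- The directional derivative `D_e f = Σᵢ eᵢ ∂f/∂xᵢ`. -/
noncomputable def Dd {n : ℕ} (e : Fin n → ℝ) (f : MvPolynomial (Fin n) ℝ) :
    MvPolynomial (Fin n) ℝ :=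
  ∑ i, MvPolynomial.C (e i) * MvPolynomial.pderiv i f

/-- `Int(f,e)`: homogeneous polynomials of degree `d−1` interlacing `f` (of degree `d`)
with respect to `e` and positive at `e`. -/
def IntCone {n : ℕ} (f : MvPolynomial (Fin n) ℝ) (e : Fin n → ℝ) (d : ℕ) :
    Set (MvPolynomial (Fin n) ℝ) :=
  {g | g.IsHomogeneous (d - 1) ∧ Interlaces g f e ∧ 0 < MvPolynomial.eval e g}

/-- The Wronskian polynomial `Δ_{e,a} f = D_e f · D_a f − f · D_e D_a f`. -/
noncomputable def Wron {n : ℕ} (e a : Fin n → ℝ) (f : MvPolynomial (Fin n) ℝ) :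
    MvPolynomial (Fin n) ℝ :=
  Dd e f * Dd a f - f * Dd e (Dd a f)

/-- A polynomial is a sum of squares of polynomials. -/
def IsSOS {n : ℕ} (p : MvPolynomial (Fin n) ℝ) : Prop :=
  ∃ (k : ℕ) (g : Fin k → MvPolynomial (Fin n) ℝ), p = ∑ i, (g i) ^ 2

/-- The matrix pencil `M(x) = x₁M₁ + … + xₙMₙ` as a matrix of polynomials. -/
noncomputable def pencil {n d : ℕ} (M : Fin n → Matrix (Fin d) (Fin d) ℝ) :
    Matrix (Fin d) (Fin d) (MvPolynomial (Fin n) ℝ) :=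
  Matrix.of fun i j => ∑ k, MvPolynomial.C (M k i j) * MvPolynomial.X k

/-- `Δ_{ij} f = (∂f/∂xᵢ)(∂f/∂xⱼ) − f·(∂²f/∂xᵢ∂xⱼ)`. -/
noncomputable def Dij {n : ℕ} (i j : Fin n) (f : MvPolynomial (Fin n) ℝ) :
    MvPolynomial (Fin n) ℝ :=
  MvPolynomial.pderiv i f * MvPolynomial.pderiv j f -
    f * MvPolynomial.pderiv i (MvPolynomial.pderiv j f)

/-- `f` is stable: `f(μ) ≠ 0` whenever every coordinate of `μ` has positive imaginary part. -/
def IsStable {n : ℕ} (f : MvPolynomial (Fin n) ℝ) : Prop :=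
  ∀ μ : Fin n → ℂ, (∀ i, 0 < (μ i).im) → MvPolynomial.aeval μ f ≠ 0

open Polynomial

section LineSubst

variable {R S σ : Type*} [CommRing R] [CommRing S] [Algebra R S]

-- `lineRestrict f e a` unfolds to `lineSubst a e f`.
noncomputable def lineSubst (v u : σ → S) : MvPolynomial σ R →ₐ[R] S[X] :=
  MvPolynomial.aeval fun i => C (v i) + C (u i) * X

variable (v u : σ → S)

theorem natDegree_le_and_coeff_lineSubst_monomial (m : σ →₀ ℕ) (r : R) :
    (lineSubst v u (MvPolynomial.monomial m r)).natDegree ≤ m.degree ∧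
      (lineSubst v u (MvPolynomial.monomial m r)).coeff m.degree =
        MvPolynomial.aeval u (MvPolynomial.monomial m r) := by
  induction m using Finsupp.induction generalizing r with
  | zero => simp [lineSubst, Polynomial.algebraMap_apply]
  | single_add i k m _ _ ih =>
    have hL : (C (v i) + C (u i) * X).natDegree ≤ 1 := by compute_degree
    have hLk : ((C (v i) + C (u i) * X) ^ k).natDegree ≤ k * 1 :=
      natDegree_pow_le_of_le k hL
    obtain ⟨ihd, ihc⟩ := ih r
    rw [MvPolynomial.monomial_single_add, map_mul, map_pow, map_add, Finsupp.degree_single]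
    simp only [lineSubst, MvPolynomial.aeval_X] at ihd ihc ⊢
    rw [mul_one] at hLk
    refine ⟨natDegree_mul_le.trans (add_le_add hLk ihd), ?_⟩
    rw [coeff_mul_add_eq_of_natDegree_le hLk ihd, ihc, map_mul, map_pow, MvPolynomial.aeval_X]
    congr 1
    simpa using coeff_pow_of_natDegree_le (m := k) hL

theorem natDegree_le_and_coeff_lineSubst {f : MvPolynomial σ R} {d : ℕ}
    (hf : f.IsHomogeneous d) :
    (lineSubst v u f).natDegree ≤ d ∧ (lineSubst v u f).coeff d = MvPolynomial.aeval u f := by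
  classical
  rw [← f.support_sum_monomial_coeff]
  simp only [map_sum, finsetSum_coeff]
  have hdeg : ∀ m ∈ f.support, m.degree = d := fun m hm =>
    by_contra fun hne => MvPolynomial.mem_support_iff.mp hm (hf.coeff_eq_zero hne)
  refine ⟨natDegree_sum_le_of_forall_le _ _ fun m hm => ?_, Finset.sum_congr rfl fun m hm => ?_⟩
  · simpa [hdeg m hm] using (natDegree_le_and_coeff_lineSubst_monomial v u m _).1
  · simpa [hdeg m hm] using (natDegree_le_and_coeff_lineSubst_monomial v u m _).2

theorem monic_lineSubst {f : MvPolynomial σ R} {d : ℕ} (hf : f.IsHomogeneous d)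
    (hu : MvPolynomial.aeval u f = 1) : (lineSubst v u f).Monic :=
  have h := natDegree_le_and_coeff_lineSubst v u hf
  monic_of_natDegree_le_of_coeff_eq_one d h.1 (h.2.trans hu)

theorem map_lineSubst {T : Type*} [CommRing T] [Algebra R T] (φ : S →ₐ[R] T)
    (f : MvPolynomial σ R) :
    (lineSubst v u f).map (φ : S →+* T) = lineSubst (φ ∘ v) (φ ∘ u) f := by
  rw [← coe_mapAlgHom, ← AlgHom.comp_apply, lineSubst, MvPolynomial.comp_aeval]
  simp [lineSubst]

theorem eval_zero_lineSubst (f : MvPolynomial σ R) :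
    (lineSubst v u f).eval 0 = MvPolynomial.aeval v f := by
  rw [← coe_aeval_eq_eval, ← AlgHom.restrictScalars_apply R, ← AlgHom.comp_apply, lineSubst,
    MvPolynomial.comp_aeval]
  simp

end LineSubst

theorem Polynomial.Monic.dvd_of_forall_map_dvd {A B ι : Type*} [CommRing A] [Nontrivial A]
    [CommRing B] [IsDomain B] {U P : A[X]} (hU : U.Monic) (φ : ι → A →+* B)
    (hφ : ∀ x, (∀ i, φ i x = 0) → x = 0) (hdvd : ∀ i, U.map (φ i) ∣ P.map (φ i)) : U ∣ P := by
  rw [← modByMonic_eq_zero_iff_dvd hU]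
  have hmap : ∀ i, (P %ₘ U).map (φ i) = 0 := fun i => by
    refine eq_zero_of_dvd_of_degree_lt (p := U.map (φ i)) ?_ ?_
    · have := congrArg (Polynomial.map (φ i)) (modByMonic_add_div P U)
      rw [Polynomial.map_add, Polynomial.map_mul] at this
      exact (dvd_add_left (dvd_mul_right _ _)).mp (this ▸ hdvd i)
    · calc ((P %ₘ U).map (φ i)).degree ≤ (P %ₘ U).degree := degree_map_le
        _ < U.degree := degree_modByMonic_lt P hU
        _ = (U.map (φ i)).degree := (hU.degree_map (φ i)).symm
  ext j
  exact hφ _ fun i => by simpa using congrArg (coeff · j) (hmap i)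

theorem MvPolynomial.dvd_of_forall_lineSubst_dvd {K σ : Type*} [Field K] [Infinite K]
    {g h : MvPolynomial σ K} {d : ℕ} {e : σ → K} (hg : g.IsHomogeneous d)
    (he : eval e g ≠ 0) (hdvd : ∀ a, lineSubst a e g ∣ lineSubst a e h) : g ∣ h := by
  -- Rescaling to `g'(e) = 1` makes `g'(x + t e)` monic in `t`.
  set g' := C (eval e g)⁻¹ * g
  have hgg' : g = C (eval e g) * g' := by
    rw [← mul_assoc, ← map_mul, mul_inv_cancel₀ he, map_one, one_mul]
  suffices lineSubst X (C ∘ e) g' ∣ lineSubst X (C ∘ e) h by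
    have := map_dvd (Polynomial.evalRingHom 0) this
    simp only [coe_evalRingHom, eval_zero_lineSubst, aeval_X_left_apply] at this
    rw [hgg']
    exact ((Ne.isUnit he).map C).mul_left_dvd.mpr this
  refine Monic.dvd_of_forall_map_dvd (monic_lineSubst _ _ (hg.C_mul _) ?_)
    (fun a => eval a) (fun x hx => funext fun a => by simpa using hx a) fun a => ?_
  · rw [map_mul, aeval_C, ← algebraMap_eq, aeval_algebraMap_apply, aeval_eq_eval, ← map_mul,
      inv_mul_cancel₀ he, map_one]
  · have hmap : ∀ f, (lineSubst X (C ∘ e) f).map (eval a) = lineSubst a e f := fun f => by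
      rw [← coe_aeval_eq_eval, map_lineSubst]
      congr <;> ext <;> simp
    rw [hmap, hmap, map_mul]
    exact (((Ne.isUnit (inv_ne_zero he)).map C).map _).mul_left_dvd.mpr (hdvd a)

namespace List

variable {α : Type*} [LinearOrder α]

theorem countP_lt_add_count_le_length (l : List α) (a : α) :
    l.countP (· < a) + l.count a ≤ l.length := by
  rw [length_eq_countP_add_countP (· < a), count_eq_countP]
  refine Nat.add_le_add_left (countP_mono_left fun x _ hx => ?_) _
  simp_all

theorem Pairwise.getD_eq_of_countP_lt_le {l : List α} (hl : l.Pairwise (· ≤ ·)) {a : α} (d : α)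
    {j : ℕ} (hj₁ : l.countP (· < a) ≤ j) (hj₂ : j < l.countP (· < a) + l.count a) :
    l.getD j d = a := by
  induction l generalizing j with
  | nil => simp at hj₂
  | cons x l ih =>
    have hxl : ∀ y ∈ l, x ≤ y := (pairwise_cons.mp hl).1
    rcases lt_trichotomy x a with hx | rfl | hx
    · simp only [countP_cons, hx, decide_true, if_true, count_cons, beq_iff_eq, hx.ne, if_false]
        at hj₁ hj₂
      obtain ⟨j, rfl⟩ : ∃ j', j = j' + 1 := ⟨j - 1, by omega⟩
      exact ih (pairwise_cons.mp hl).2 (by omega) (by omega)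
    · have hl0 : l.countP (· < x) = 0 := countP_eq_zero.mpr fun y hy => by simpa using hxl y hy
      simp only [countP_cons, lt_irrefl, decide_false, Bool.false_eq_true, if_false, hl0,
        count_cons_self] at hj₁ hj₂
      cases j with
      | zero => rfl
      | succ j => exact ih (pairwise_cons.mp hl).2 (by omega) (by omega)
    · have hl0 : l.count a = 0 := count_eq_zero.mpr fun ha => (hxl a ha).not_gt hx
      simp [hx.ne', hl0] at hj₂
      omega

theorem le_count_of_getD_eq {l : List α} {a d : α} {i m : ℕ} (hlen : i + m ≤ l.length)
    (h : ∀ j, i ≤ j → j < i + m → l.getD j d = a) : m ≤ l.count a := by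
  have hrep : (l.drop i).take m = replicate m a := by
    refine eq_replicate_iff.mpr ⟨by simp; omega, fun b hb => ?_⟩
    obtain ⟨j, hj, rfl⟩ := mem_iff_getElem.mp hb
    simp only [length_take, length_drop] at hj
    rw [getElem_take, getElem_drop, ← getD_eq_getElem _ d]
    exact h (i + j) (by omega) (by omega)
  simpa [hrep] using (((l.drop i).take_sublist m).trans (l.drop_sublist i)).count_le a

end List

theorem RealRooted.splits {p : ℝ[X]} (hp : RealRooted p) : p.Splits :=
  Splits.of_splits_map (algebraMap ℝ ℂ) (IsAlgClosed.splits _) fun z hz =>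
    ⟨z.re, Complex.ext (by simp) (by
      simpa [eq_comm] using hp z (by simpa [eval_map_algebraMap] using (mem_roots'.mp hz).2))⟩

theorem RealRooted.length_sortedRoots {p : ℝ[X]} (hp : RealRooted p) :
    (sortedRoots p).length = p.natDegree := by
  rw [sortedRoots, Multiset.length_sort, splits_iff_card_roots.mp hp.splits]

theorem count_sortedRoots (p : ℝ[X]) (a : ℝ) : (sortedRoots p).count a = p.roots.count a := by
  rw [← Multiset.coe_count, sortedRoots, Multiset.sort_eq]

theorem InterlacesU.count_roots_le {p q : ℝ[X]} (hI : InterlacesU q p) (a : ℝ) :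
    p.roots.count a ≤ q.roots.count a + 1 := by
  obtain ⟨hp, hq, hdeg, hil⟩ := hI
  set i := (sortedRoots p).countP (· < a)
  have hlen := (sortedRoots p).countP_lt_add_count_le_length a
  have hsorted : (sortedRoots p).Pairwise (· ≤ ·) := Multiset.pairwise_sort _ _
  have hrun := fun j => hsorted.getD_eq_of_countP_lt_le (a := a) 0 (j := j)
  rw [← count_sortedRoots, ← count_sortedRoots]
  rw [hp.length_sortedRoots] at hlen hil
  by_cases hm : (sortedRoots p).count a = 0
  · omega
  suffices (sortedRoots p).count a - 1 ≤ (sortedRoots q).count a by omega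
  refine List.le_count_of_getD_eq (d := 0) (i := i) (by rw [hq.length_sortedRoots]; omega)
    fun j hj₁ hj₂ => ?_
  obtain ⟨hl, hr⟩ := hil j (by omega)
  rw [hrun j hj₁ (by omega)] at hl
  rw [hrun (j + 1) (by omega) (by omega)] at hr
  exact le_antisymm hr hl

theorem InterlacesU.pow_dvd {u w q : ℝ[X]} {k : ℕ} (hI : InterlacesU q (u ^ k * w)) :
    u ^ (k - 1) ∣ q := by
  obtain _ | k := k
  · exact one_dvd q
  have hp0 : u ^ (k + 1) * w ≠ 0 := fun h0 => by simpa [h0] using hI.2.2.1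
  have hu0 : u ≠ 0 := fun h0 => hp0 (by simp [h0])
  have hsplits : u.Splits :=
    hI.1.splits.of_dvd hp0 (dvd_mul_of_dvd_left (dvd_pow_self u k.succ_ne_zero) w)
  refine (hsplits.pow k).dvd_of_roots_le_roots (pow_ne_zero k hu0)
    (Multiset.le_iff_count.mpr fun a => ?_)
  have hcount := hI.count_roots_le a
  rw [roots_mul hp0, roots_pow, Multiset.count_add, Multiset.count_nsmul] at hcount
  rw [roots_pow, Multiset.count_nsmul]
  rcases Nat.eq_zero_or_pos (u.roots.count a) with h | h
  · simp [h]
  · rw [add_mul, one_mul] at hcount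
    omega

theorem pow_dvd_of_interlaces_general {n d₁ k : ℕ} (f₁ f₂ h : MvPolynomial (Fin n) ℝ)
    (e : Fin n → ℝ) (hf₁ : f₁.IsHomogeneous d₁)
    (hyp : IsHyperbolic (f₁ ^ k * f₂) e)
    (hint : Interlaces h (f₁ ^ k * f₂) e) :
    f₁ ^ (k - 1) ∣ h := by
  have he : MvPolynomial.eval e (f₁ ^ (k - 1)) ≠ 0 := fun h0 => hyp.1 <| by
    obtain ⟨g, hg⟩ : f₁ ^ (k - 1) ∣ f₁ ^ k * f₂ :=
      dvd_mul_of_dvd_left (pow_dvd_pow f₁ (Nat.sub_le k 1)) f₂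
    rw [hg, map_mul, h0, zero_mul]
  refine MvPolynomial.dvd_of_forall_lineSubst_dvd (hf₁.pow (k - 1)) he fun a => ?_
  have hline : InterlacesU (lineSubst a e h) (lineSubst a e (f₁ ^ k * f₂)) := hint a
  rw [map_mul, map_pow] at hline
  rw [map_pow]
  exact hline.pow_dvd

/-- Lemma 2.3(c): if `h` interlaces `f₁^k·f₂`, then `f₁^(k-1)` divides `h`. -/
theorem pow_dvd_of_interlaces {n d₁ d₂ k : ℕ} (f₁ f₂ h : MvPolynomial (Fin n) ℝ)
    (e : Fin n → ℝ) (hf₁ : f₁.IsHomogeneous d₁) (hf₂ : f₂.IsHomogeneous d₂)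
    (hk : 1 ≤ k) (hyp : IsHyperbolic (f₁ ^ k * f₂) e)
    (hh : h.IsHomogeneous (k * d₁ + d₂ - 1))
    (hint : Interlaces h (f₁ ^ k * f₂) e) :
    f₁ ^ (k - 1) ∣ h :=
  pow_dvd_of_interlaces_general f₁ f₂ h e hf₁ hyp hint
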